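/- Theorem 5 (consistency of the low-confidence rule): consider a sequence of committees, the n-th consisting of n experts with competences p_{n,i} ∈ (0,1) and independent estimates p̂_{n,i} = k_{n,i}/m_{n,i} with k_{n,i} ~ Binomial(m_{n,i}, p_{n,i}) independent of the correctness indicators. If (1/√n)·Σ_{i=1}^n (p_{n,i} − 1/2)² → ∞ as n → ∞, then the probability of error of the low-confidence rule in the n-th committee, P(Σ_{i=1}^n (p̂_{n,i} − 1/2)(ξ_{n,i} − 1/2) ≤ 0), tends to 0 as n → ∞. -/

import Mathlib

/-!
Write `Xᵢ = (p̂ᵢ - 1/2)(ξᵢ - 1/2)`, so that the rule errs exactly when `∑ Xᵢ ≤ 0`. The `Xᵢ` are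
independent, take values in `[-1/4, 1/4]`, and since `p̂ᵢ` is an unbiased estimate of `pᵢ`
independent of `ξᵢ`, `𝔼 Xᵢ = (pᵢ - 1/2)²`. With `Aₙ = ∑ (pᵢ - 1/2)²`, Chebyshev's inequality
bounds the error probability by `Var(∑ Xᵢ) / Aₙ² ≤ n / (16 Aₙ²) = 1 / (16 (Aₙ / √n)²)`, which
tends to `0` by hypothesis.
-/

open MeasureTheory ProbabilityTheory Filter
open scoped unitInterval

section LowConfidence

variable {Ω : Type*} [MeasurableSpace Ω] {μ : Measure Ω}

lemma hasLaw_binomial_of_measure_eq [IsProbabilityMeasure μ] {X : Ω → ℕ} {n : ℕ} {p : I}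
    (hX : Measurable X)
    (h : ∀ j ≤ n, μ {ω | X ω = j} =
      ENNReal.ofReal (n.choose j * (p : ℝ) ^ j * (1 - p) ^ (n - j))) :
    HasLaw X (binomial n p) μ := by
  have := Measure.isProbabilityMeasure_map (μ := μ) hX.aemeasurable
  set s : Set ℕ := ↑(Finset.Iic n)
  have hsingle : ∀ j ≤ n, μ.map X {j} = binomial n p {j} := fun j hj => by
    rw [Measure.map_apply hX (measurableSet_singleton j), binomial_singleton, ← h j hj]; rfl
  have hBin : binomial n p sᶜ = 0 := by
    convert ae_iff.1 (ae_le_of_hasLaw_binomial (HasLaw.id (μ := binomial n p)))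
    ext; simp [s]
  -- `μ.map X` and `Bin(n, p)` agree on the singletons of `s`, which carry all the mass of
  -- `Bin(n, p)`.
  have hmap : μ.map X sᶜ = 0 := by
    rw [prob_compl_eq_zero_iff (Finset.measurableSet _), ← sum_measure_singleton,
      Finset.sum_congr rfl fun j hj => hsingle j (Finset.mem_Iic.1 hj), sum_measure_singleton,
      ← prob_compl_eq_zero_iff (Finset.measurableSet _), hBin]
  refine ⟨hX.aemeasurable, Measure.ext_of_singleton fun j => ?_⟩
  by_cases hj : j ≤ n
  · exact hsingle j hj
  · have hjs : {j} ⊆ sᶜ := by simpa [s] using hj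
    rw [measure_mono_null hjs hmap, measure_mono_null hjs hBin]

lemma integral_natCast_binomial (n : ℕ) (p : I) : ∫ j, (j : ℝ) ∂(binomial n p) = n * p := by
  -- `∑ ν • bernsteinPolynomial n ν = n • X`, evaluated at `p`
  have hmean := congrArg (Polynomial.eval (p : ℝ)) (bernsteinPolynomial.sum_smul ℝ n)
  simp only [Polynomial.eval_finsetSum, bernsteinPolynomial] at hmean
  simp at hmean
  rw [integral_binomial, ← Nat.range_succ_eq_Iic, ← hmean]
  exact Finset.sum_congr rfl fun k _ => by rw [smul_eq_mul, mul_comm]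

lemma integral_eq_measureReal_of_zero_or_one {ξ : Ω → ℝ} (hξ : Measurable ξ)
    (h01 : ∀ ω, ξ ω = 0 ∨ ξ ω = 1) : ∫ ω, ξ ω ∂μ = μ.real {ω | ξ ω = 1} := by
  have hind : ξ = Set.indicator {ω | ξ ω = 1} 1 := by
    funext ω
    rcases h01 ω with h | h <;> simp [h]
  nth_rewrite 1 [hind]
  exact integral_indicator_one (hξ (measurableSet_singleton 1))

lemma measure_sum_nonpos_le_of_iIndepFun [IsProbabilityMeasure μ] {ι : Type*} [Fintype ι]
    {X : ι → Ω → ℝ} (hXm : ∀ i, AEMeasurable (X i) μ) (hind : iIndepFun X μ) {c : ℝ}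
    (hX : ∀ i, ∀ᵐ ω ∂μ, X i ω ∈ Set.Icc (-c) c) (hpos : 0 < ∑ i, μ[X i]) :
    μ {ω | ∑ i, X i ω ≤ 0} ≤
      ENNReal.ofReal (Fintype.card ι * c ^ 2 / (∑ i, μ[X i]) ^ 2) := by
  have hmem : ∀ i, MemLp (X i) 2 μ := fun i =>
    memLp_of_bounded (hX i) (hXm i).aestronglyMeasurable 2
  have hvar : variance (∑ i, X i) μ ≤ Fintype.card ι * c ^ 2 := by
    rw [IndepFun.variance_sum (fun i _ => hmem i) fun i _ j _ hij => hind.indepFun hij]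
    calc ∑ i, variance (X i) μ ≤ ∑ _i : ι, c ^ 2 := Finset.sum_le_sum fun i _ =>
          (variance_le_sq_of_bounded (hX i) (hXm i)).trans_eq (by ring)
      _ = Fintype.card ι * c ^ 2 := by simp
  have hmean : μ[∑ i, X i] = ∑ i, μ[X i] := by
    simp only [Finset.sum_apply]
    exact integral_finsetSum _ fun i _ => (hmem i).integrable one_le_two
  calc μ {ω | ∑ i, X i ω ≤ 0}
      ≤ μ {ω | ∑ i, μ[X i] ≤ |(∑ i, X i) ω - μ[∑ i, X i]|} := by
        refine measure_mono fun ω (hω : ∑ i, X i ω ≤ 0) => ?_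
        show ∑ i, μ[X i] ≤ |(∑ i, X i) ω - μ[∑ i, X i]|
        rw [hmean, Finset.sum_apply, abs_sub_comm, abs_of_nonneg (by linarith)]
        linarith
    _ ≤ ENNReal.ofReal (variance (∑ i, X i) μ / (∑ i, μ[X i]) ^ 2) :=
        meas_ge_le_variance_div_sq (memLp_finsetSum' _ fun i _ => hmem i) hpos
    _ ≤ _ := by gcongr

lemma tendsto_natCast_div_sq_of_tendsto_div_sqrt {A : ℕ → ℝ}
    (hA : Tendsto (fun n : ℕ => (1 / Real.sqrt n) * A n) atTop atTop) :
    Tendsto (fun n : ℕ => (n : ℝ) / A n ^ 2) atTop (nhds 0) := by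
  have hsq : ∀ n : ℕ, (n : ℝ) / A n ^ 2 = ((1 / Real.sqrt n * A n) ^ 2)⁻¹ := fun n => by
    rw [mul_pow, div_pow, Real.sq_sqrt n.cast_nonneg]
    field_simp
  simp_rw [hsq]
  exact tendsto_inv_atTop_zero.comp ((tendsto_pow_atTop two_ne_zero).comp hA)

/-- The summand `(p̂ - 1/2)(ξ - 1/2)` of the low-confidence rule, with `p̂ = j / m`. -/
noncomputable def lowConfidenceTerm (m : ℕ) (x : ℝ) (j : ℕ) : ℝ :=
  ((j : ℝ) / m - 1 / 2) * (x - 1 / 2)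

lemma lowConfidenceTerm_mem_Icc {m j : ℕ} {x : ℝ} (hj : j ≤ m) (hx : x = 0 ∨ x = 1) :
    lowConfidenceTerm m x j ∈ Set.Icc (-(1 / 4)) (1 / 4) := by
  have h0 : 0 ≤ (j : ℝ) / m := by positivity
  have h1 : (j : ℝ) / m ≤ 1 := div_le_one_of_le₀ (by exact_mod_cast hj) (by positivity)
  rcases hx with rfl | rfl <;> constructor <;> unfold lowConfidenceTerm <;> linarith

lemma integral_lowConfidenceTerm [IsProbabilityMeasure μ] {ξ : Ω → ℝ} {k : Ω → ℕ} {m : ℕ}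
    {p : I} (hm : m ≠ 0) (hξ : Measurable ξ) (h01 : ∀ ω, ξ ω = 0 ∨ ξ ω = 1)
    (hξp : μ {ω | ξ ω = 1} = ENNReal.ofReal p) (hk : HasLaw k (binomial m p) μ)
    (hind : IndepFun ξ k μ) :
    ∫ ω, lowConfidenceTerm m (ξ ω) (k ω) ∂μ = (p - 1 / 2) ^ 2 := by
  let f : ℕ → ℝ := fun j => (j : ℝ) / m - 1 / 2
  let g : ℝ → ℝ := fun x => x - 1 / 2
  have hf : μ[f ∘ k] = (p : ℝ) - 1 / 2 := by
    rw [hk.integral_comp (by fun_prop),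
      integral_sub ((integrable_binomial _).div_const _) (integrable_const _), integral_div,
      integral_natCast_binomial]
    simp [hm]
  have hξint : Integrable ξ μ := (integrable_const (1 : ℝ)).mono' hξ.aestronglyMeasurable
    (ae_of_all _ fun ω => by rcases h01 ω with h | h <;> simp [h])
  have hg : μ[g ∘ ξ] = (p : ℝ) - 1 / 2 := by
    rw [Function.comp_def, integral_sub hξint (integrable_const _),
      integral_eq_measureReal_of_zero_or_one hξ h01, measureReal_def, hξp,
      ENNReal.toReal_ofReal p.2.1]
    simp
  have hfm : Measurable f := by fun_prop
  have hfg : IndepFun (f ∘ k) (g ∘ ξ) μ := hind.symm.comp hfm (by fun_prop)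
  calc ∫ ω, lowConfidenceTerm m (ξ ω) (k ω) ∂μ = μ[(f ∘ k) * (g ∘ ξ)] := rfl
    _ = (p - 1 / 2) ^ 2 := by
      rw [hfg.integral_mul_eq_mul_integral
        (hfm.comp_aemeasurable hk.aemeasurable).aestronglyMeasurable (by fun_prop), hf, hg, sq]

lemma measure_sum_lowConfidenceTerm_nonpos_le [IsProbabilityMeasure μ] {ι : Type*} [Fintype ι]
    {p : ι → I} {ξ : ι → Ω → ℝ} {m : ι → ℕ} {k : ι → Ω → ℕ} (hm : ∀ i, m i ≠ 0)
    (hξ : ∀ i, Measurable (ξ i)) (h01 : ∀ i ω, ξ i ω = 0 ∨ ξ i ω = 1)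
    (hξp : ∀ i, μ {ω | ξ i ω = 1} = ENNReal.ofReal (p i))
    (hk : ∀ i, HasLaw (k i) (binomial (m i) (p i)) μ)
    (hind : iIndepFun (fun i ω => (ξ i ω, k i ω)) μ) (hindin : ∀ i, IndepFun (ξ i) (k i) μ)
    (hpos : 0 < ∑ i, ((p i : ℝ) - 1 / 2) ^ 2) :
    μ {ω | ∑ i, lowConfidenceTerm (m i) (ξ i ω) (k i ω) ≤ 0} ≤
      ENNReal.ofReal (Fintype.card ι * (1 / 4) ^ 2 / (∑ i, ((p i : ℝ) - 1 / 2) ^ 2) ^ 2) := by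
  have hmean : ∀ i,
      ∫ ω, lowConfidenceTerm (m i) (ξ i ω) (k i ω) ∂μ = ((p i : ℝ) - 1 / 2) ^ 2 := fun i =>
    integral_lowConfidenceTerm (hm i) (hξ i) (h01 i) (hξp i) (hk i) (hindin i)
  have hkm : ∀ i, AEMeasurable (k i) μ := fun i => (hk i).aemeasurable
  simp_rw [← hmean]
  refine measure_sum_nonpos_le_of_iIndepFun
    (X := fun i ω => lowConfidenceTerm (m i) (ξ i ω) (k i ω))
    (fun i => by unfold lowConfidenceTerm; fun_prop)
    (hind.comp (fun i q => lowConfidenceTerm (m i) q.1 q.2) fun i => by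
      unfold lowConfidenceTerm; fun_prop)
    (fun i => (ae_le_of_hasLaw_binomial (hk i)).mono fun ω hω =>
      lowConfidenceTerm_mem_Icc hω (h01 i ω))
    (by simpa only [hmean] using hpos)

end LowConfidence

/-- Theorem 5 (consistency of the low-confidence rule): for a sequence of committees,
the `n`-th having `n` experts with competences `p n i`, `{0,1}`-valued correctness
indicators `ξ n i` with `P(ξ n i = 1) = p n i`, and independent binomial estimates
`p̂ n i = k n i / m n i`, if `(1/√n) ∑ i (p n i − 1/2)² → ∞`, then the probability of
error of the low-confidence rule tends to `0`. -/
theorem low_confidence_rule_consistency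
    (Ω : ℕ → Type*) [∀ n, MeasurableSpace (Ω n)]
    (μ : ∀ n, Measure (Ω n)) [∀ n, IsProbabilityMeasure (μ n)]
    (p : ∀ n : ℕ, Fin n → ℝ) (hp : ∀ n i, p n i ∈ Set.Ioo (0 : ℝ) 1)
    (ξ : ∀ n : ℕ, Fin n → Ω n → ℝ)
    (hξmeas : ∀ n i, Measurable (ξ n i))
    (hξval : ∀ n i ω, ξ n i ω = 0 ∨ ξ n i ω = 1)
    (hξprob : ∀ n i, μ n {ω | ξ n i ω = 1} = ENNReal.ofReal (p n i))
    (m : ∀ n : ℕ, Fin n → ℕ) (hm : ∀ n i, 1 ≤ m n i)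
    (k : ∀ n : ℕ, Fin n → Ω n → ℕ) (hkmeas : ∀ n i, Measurable (k n i))
    (hbinom : ∀ n i j, j ≤ m n i → μ n {ω | k n i ω = j} =
        ENNReal.ofReal ((m n i).choose j * p n i ^ j * (1 - p n i) ^ (m n i - j)))
    (hind : ∀ n, iIndepFun (fun i ω => (ξ n i ω, k n i ω)) (μ n))
    (hindin : ∀ n i, IndepFun (ξ n i) (k n i) (μ n))
    (hdiv : Tendsto (fun n : ℕ => (1 / Real.sqrt n) * ∑ i, (p n i - 1/2) ^ 2)
      atTop atTop) :
    Tendsto (fun n : ℕ =>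
        μ n {ω | ∑ i, ((k n i ω : ℝ) / (m n i : ℝ) - 1/2) * (ξ n i ω - 1/2) ≤ 0})
      atTop (nhds 0) := by
  have hbound : ∀ n, 0 < ∑ i, (p n i - 1 / 2) ^ 2 →
      μ n {ω | ∑ i, ((k n i ω : ℝ) / (m n i : ℝ) - 1/2) * (ξ n i ω - 1/2) ≤ 0} ≤
        ENNReal.ofReal (n * (1 / 4) ^ 2 / (∑ i, (p n i - 1 / 2) ^ 2) ^ 2) := fun n hA => by
    simpa [lowConfidenceTerm] using measure_sum_lowConfidenceTerm_nonpos_le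
      (p := fun i => ⟨p n i, Set.Ioo_subset_Icc_self (hp n i)⟩)
      (fun i => Nat.one_le_iff_ne_zero.1 (hm n i)) (hξmeas n) (hξval n) (hξprob n)
      (fun i => hasLaw_binomial_of_measure_eq (hkmeas n i) (hbinom n i)) (hind n) (hindin n) hA
  have hlim := ENNReal.tendsto_ofReal
    ((tendsto_natCast_div_sq_of_tendsto_div_sqrt hdiv).mul_const ((1 / 4 : ℝ) ^ 2))
  have hpos : ∀ᶠ n in atTop, 0 < ∑ i, (p n i - 1 / 2) ^ 2 :=
    (hdiv.eventually_gt_atTop 0).mono fun n hn => pos_of_mul_pos_right hn (by positivity)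
  refine tendsto_of_tendsto_of_tendsto_of_le_of_le' tendsto_const_nhds ?_
    (Eventually.of_forall fun _ => zero_le) (hpos.mono hbound)
  simpa [mul_div_right_comm] using hlim
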